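/- The cautious AA-CBR inference relation ⊢_cAA-CBR, defined by predicting from the unique concise subset of the (coherent) casebase, is cautiously monotonic: if D ⊢_c (x₁,y₁) and D ⊢_c (x₂,y₂) then D ∪ {(x₁,y₁)} ⊢_c (x₂,y₂). -/
import Mathlib


namespace AACBR

/-- In an AF with arguments `args` and attack `att`, a set `E` defends argument `a`
iff every attacker of `a` (within `args`) is attacked by some element of `E`. -/
def defends {A : Type} (args : Set A) (att : A → A → Prop) (E : Set A) (a : A) : Prop :=
  ∀ b ∈ args, att b a → ∃ c ∈ E, att c b

/-- `G_0` is the set of unattacked arguments; `G_{i+1}` is the set of arguments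
defended by `G_i`. -/
def groundedSeq {A : Type} (args : Set A) (att : A → A → Prop) : ℕ → Set A
  | 0 => {a ∈ args | ∀ b ∈ args, ¬ att b a}
  | n + 1 => {a ∈ args | defends args att (groundedSeq args att n) a}

/-- The grounded extension `⋃ i, G_i`. -/
def grounded {A : Type} (args : Set A) (att : A → A → Prop) : Set A :=
  ⋃ i, groundedSeq args att i

variable {X : Type}

/-- Cases are pairs of a characterisation (in the partially ordered set `X`, where
`α ≤ β` reads "`α` is less specific than `β`") and one of the two outcomes
(modelled as `Bool`). Attack between labelled cases of the casebase `cb`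
(which includes the default argument): `a` attacks `b` iff their outcomes differ,
`a` is at least as specific as `b`, and no case of `cb` with the same outcome as
`a` is strictly in between. -/
def cbAtt [PartialOrder X] (cb : Set (X × Bool)) (a b : X × Bool) : Prop :=
  a ∈ cb ∧ b ∈ cb ∧ a.2 ≠ b.2 ∧ b.1 ≤ a.1 ∧
    ¬ ∃ g ∈ cb, g.2 = a.2 ∧ b.1 < g.1 ∧ g.1 < a.1

/-- The arguments of the AF mined from casebase `D`, default argument `(dC, dO)`
and a new case: `none` is the new-case argument, `some c` the labelled cases. -/
def minedArgs (D : Set (X × Bool)) (dC : X) (dO : Bool) : Set (Option (X × Bool)) :=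
  insert none (Option.some '' insert (dC, dO) D)

/-- The attack relation of the (regular) AF mined from `D`, default `(dC, dO)` and
new case `N`: labelled cases attack each other as in `cbAtt`, and the new-case
argument attacks exactly the labelled cases `b` that are irrelevant to it,
i.e. with `¬ b.1 ≤ N`. -/
def minedAtt [PartialOrder X] (D : Set (X × Bool)) (dC : X) (dO : Bool) (N : X) :
    Option (X × Bool) → Option (X × Bool) → Prop
  | some a, some b => cbAtt (insert (dC, dO) D) a b
  | none, some b => b ∈ insert (dC, dO) D ∧ ¬ b.1 ≤ N
  | _, none => False

/-- The grounded extension of the AF mined from `D` and new case `N`. -/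
def minedGrounded [PartialOrder X] (D : Set (X × Bool)) (dC : X) (dO : Bool) (N : X) :
    Set (Option (X × Bool)) :=
  grounded (minedArgs D dC dO) (minedAtt D dC dO N)

open Classical in
/-- The AA-CBR_⪰ prediction for `N`: the default outcome `dO` if the default
argument is in the grounded extension, and the other outcome otherwise. -/
noncomputable def predict [PartialOrder X] (D : Set (X × Bool)) (dC : X) (dO : Bool)
    (N : X) : Bool :=
  if some (dC, dO) ∈ minedGrounded D dC dO N then dO else !dO

/-- A casebase is coherent if no characterisation occurs with two outcomes. -/
def coherent (D : Set (X × Bool)) : Prop :=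
  ∀ a ∈ D, ∀ b ∈ D, a.1 = b.1 → a.2 = b.2

/-- A case `a ∈ D` is nearest to `N` iff `a.1 ⪯ N`, maximally so. -/
def nearest [PartialOrder X] (D : Set (X × Bool)) (N : X) (a : X × Bool) : Prop :=
  a ∈ D ∧ a.1 ≤ N ∧ ¬ ∃ b ∈ D, a.1 < b.1 ∧ b.1 ≤ N

end AACBR

namespace AACBR

variable {X : Type}

/-- An example `p` is surprising w.r.t. a casebase `S` iff the AA-CBR_⪰
prediction for its characterisation from `S \ {p}` differs from its outcome. -/
def surprising [PartialOrder X] (dC : X) (dO : Bool) (S : Set (X × Bool))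
    (p : X × Bool) : Prop :=
  predict (S \ {p}) dC dO p.1 ≠ p.2

/-- `D'` is concise w.r.t. `D` iff `D' ⊆ D` and `D'` equals the set of examples
of `D` that are surprising w.r.t. `D'`. -/
def conciseWrt [PartialOrder X] (dC : X) (dO : Bool) (D D' : Set (X × Bool)) : Prop :=
  D' ⊆ D ∧ D' = {p ∈ D | surprising dC dO D' p}

end AACBR

namespace AACBR

open Classical in
/-- The concise subset of `D` (the unique one, when `D` is coherent). -/
noncomputable def conciseSubset [PartialOrder X] (dC : X) (dO : Bool)
    (D : Set (X × Bool)) : Set (X × Bool) :=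
  if h : ∃ D', conciseWrt dC dO D D' then h.choose else ∅

/-- The cautious AA-CBR classifier: predict from the concise subset of the
casebase. -/
noncomputable def cpredict [PartialOrder X] (dC : X) (dO : Bool)
    (D : Set (X × Bool)) (N : X) : Bool :=
  predict (conciseSubset dC dO D) dC dO N


lemma groundedSeq_subset_args {A : Type} (args : Set A) (att : A → A → Prop) (n : ℕ) :
    groundedSeq args att n ⊆ args := by
  cases n <;> exact fun a ha => ha.1

lemma groundedSeq_mono {A : Type} (args : Set A) (att : A → A → Prop) :
    ∀ n, groundedSeq args att n ⊆ groundedSeq args att (n + 1) := by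
  intro n
  induction n with
  | zero => exact fun a ha => ⟨ha.1, fun b hb hatt => absurd hatt (ha.2 b hb)⟩
  | succ m ih =>
      exact fun a ha => ⟨ha.1, fun b hb hatt => (ha.2 b hb hatt).imp fun c hc => ⟨ih hc.1, hc.2⟩⟩

variable {X : Type} [PartialOrder X]

lemma mem_minedArgs_some {D : Set (X × Bool)} {dC : X} {dO : Bool} {a : X × Bool} :
    some a ∈ minedArgs D dC dO ↔ a ∈ insert (dC, dO) D := by
  simp [minedArgs]

lemma none_mem_minedArgs {D : Set (X × Bool)} {dC : X} {dO : Bool} :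
    (none : Option (X × Bool)) ∈ minedArgs D dC dO :=
  Set.mem_insert _ _

lemma minedAtt_some_some {D : Set (X × Bool)} {dC : X} {dO : Bool} {N : X} {a b : X × Bool} :
    minedAtt D dC dO N (some a) (some b) = cbAtt (insert (dC, dO) D) a b := rfl

lemma minedAtt_none_some {D : Set (X × Bool)} {dC : X} {dO : Bool} {N : X} {b : X × Bool} :
    minedAtt D dC dO N none (some b) = (b ∈ insert (dC, dO) D ∧ ¬ b.1 ≤ N) := rfl

lemma not_minedAtt_none {D : Set (X × Bool)} {dC : X} {dO : Bool} {N : X}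
    {c : Option (X × Bool)} : ¬ minedAtt D dC dO N c none := by
  cases c <;> exact fun h => h

lemma none_mem_groundedSeq {D : Set (X × Bool)} {dC : X} {dO : Bool} {N : X} :
    ∀ n, none ∈ groundedSeq (minedArgs D dC dO) (minedAtt D dC dO N) n := by
  intro n
  induction n with
  | zero => exact ⟨none_mem_minedArgs, fun b hb hatt => not_minedAtt_none hatt⟩
  | succ m ih => exact groundedSeq_mono _ _ m ih

/-- every labelled case in the grounded sequence is relevant -/
lemma rel_of_mem_groundedSeq {D : Set (X × Bool)} {dC : X} {dO : Bool} {N : X} {n : ℕ}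
    {a : X × Bool} (ha : some a ∈ groundedSeq (minedArgs D dC dO) (minedAtt D dC dO N) n) :
    a.1 ≤ N := by
  by_contra hna
  have hacb : a ∈ insert (dC, dO) D :=
    mem_minedArgs_some.mp (groundedSeq_subset_args _ _ n ha)
  have hattack : minedAtt D dC dO N none (some a) := ⟨hacb, hna⟩
  cases n with
  | zero => exact ha.2 none none_mem_minedArgs hattack
  | succ m =>
      obtain ⟨c, _, hcatt⟩ := ha.2 none none_mem_minedArgs hattack
      exact not_minedAtt_none hcatt

lemma cbAtt_localize {D : Set (X × Bool)} {dC : X} {dO : Bool} {N : X} (hdc : dC ≤ N)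
    {a b : X × Bool} (haN : a.1 ≤ N) (hbN : b.1 ≤ N) :
    cbAtt (insert (dC, dO) D) a b ↔
      cbAtt (insert (dC, dO) {p ∈ D | p.1 ≤ N}) a b := by
  have hmem : ∀ p : X × Bool, p ∈ insert (dC, dO) ({p ∈ D | p.1 ≤ N} : Set (X × Bool)) ↔
      p ∈ insert (dC, dO) D ∧ p.1 ≤ N := by
    intro p
    constructor
    · rintro (rfl | ⟨hpD, hpN⟩)
      · exact ⟨Set.mem_insert _ _, hdc⟩
      · exact ⟨Set.mem_insert_of_mem _ hpD, hpN⟩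
    · rintro ⟨(rfl | hpD), hpN⟩
      · exact Set.mem_insert _ _
      · exact Set.mem_insert_of_mem _ ⟨hpD, hpN⟩
  constructor
  · rintro ⟨ha, hb, hne, hle, hblock⟩
    refine ⟨(hmem a).mpr ⟨ha, haN⟩, (hmem b).mpr ⟨hb, hbN⟩, hne, hle, ?_⟩
    rintro ⟨g, hg, hgo, hg1, hg2⟩
    exact hblock ⟨g, ((hmem g).mp hg).1, hgo, hg1, hg2⟩
  · rintro ⟨ha, hb, hne, hle, hblock⟩
    refine ⟨((hmem a).mp ha).1, ((hmem b).mp hb).1, hne, hle, ?_⟩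
    rintro ⟨g, hg, hgo, hg1, hg2⟩
    exact hblock ⟨g, (hmem g).mpr ⟨hg, le_trans hg2.le haN⟩, hgo, hg1, hg2⟩

lemma predict_localize (D : Set (X × Bool)) (dC : X) (dO : Bool) (N : X) (hdc : dC ≤ N) :
    predict D dC dO N = predict {p ∈ D | p.1 ≤ N} dC dO N := by
  set D' : Set (X × Bool) := {p ∈ D | p.1 ≤ N} with hD'
  have hD'sub : D' ⊆ D := fun p hp => hp.1
  have hmem : ∀ p : X × Bool, p ∈ insert (dC, dO) D' ↔ p ∈ insert (dC, dO) D ∧ p.1 ≤ N := by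
    intro p
    constructor
    · rintro (rfl | ⟨hpD, hpN⟩)
      · exact ⟨Set.mem_insert _ _, hdc⟩
      · exact ⟨Set.mem_insert_of_mem _ hpD, hpN⟩
    · rintro ⟨(rfl | hpD), hpN⟩
      · exact Set.mem_insert _ _
      · exact Set.mem_insert_of_mem _ ⟨hpD, hpN⟩
  -- forward: relevant member of grounded seq of D' AF is in grounded seq (n+1) of D AF
  have hfwd : ∀ n (a : X × Bool), a.1 ≤ N →
      some a ∈ groundedSeq (minedArgs D' dC dO) (minedAtt D' dC dO N) n →
      some a ∈ groundedSeq (minedArgs D dC dO) (minedAtt D dC dO N) (n + 1) := by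
    intro n
    induction n with
    | zero =>
        intro a haN ha
        refine ⟨mem_minedArgs_some.mpr ((hmem a).mp (mem_minedArgs_some.mp ha.1)).1, ?_⟩
        intro b hb hatt
        cases b with
        | none => exact absurd haN hatt.2
        | some q =>
            by_cases hq : q.1 ≤ N
            · exact absurd ((cbAtt_localize hdc hq haN).mp hatt)
                (ha.2 (some q) (mem_minedArgs_some.mpr ((hmem q).mpr ⟨hatt.1, hq⟩)))
            · exact ⟨none, none_mem_groundedSeq 0, hatt.1, hq⟩
    | succ m ih =>
        intro a haN ha
        refine ⟨mem_minedArgs_some.mpr ((hmem a).mp (mem_minedArgs_some.mp ha.1)).1, ?_⟩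
        intro b hb hatt
        cases b with
        | none => exact absurd haN hatt.2
        | some q =>
            by_cases hq : q.1 ≤ N
            · have hatt' : cbAtt (insert (dC, dO) D') q a :=
                (cbAtt_localize hdc hq haN).mp hatt
              obtain ⟨c, hc, hcatt⟩ :=
                ha.2 (some q) (mem_minedArgs_some.mpr hatt'.1) hatt'
              cases c with
              | none => exact absurd (((hmem q).mp hcatt.1).2) hcatt.2
              | some r =>
                  have hrN : r.1 ≤ N := ((hmem r).mp hcatt.1).2
                  exact ⟨some r, ih r hrN hc, (cbAtt_localize hdc hrN hq).mpr hcatt⟩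
            · exact ⟨none, none_mem_groundedSeq (m + 1), hatt.1, hq⟩
  -- backward
  have hbwd : ∀ n (a : X × Bool), a.1 ≤ N →
      some a ∈ groundedSeq (minedArgs D dC dO) (minedAtt D dC dO N) n →
      some a ∈ groundedSeq (minedArgs D' dC dO) (minedAtt D' dC dO N) n := by
    intro n
    induction n with
    | zero =>
        intro a haN ha
        refine ⟨mem_minedArgs_some.mpr ((hmem a).mpr ⟨mem_minedArgs_some.mp ha.1, haN⟩), ?_⟩
        intro b hb hatt
        cases b with
        | none => exact absurd ((hmem a).mp hatt.1).2 hatt.2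
        | some q =>
            have hqN : q.1 ≤ N := ((hmem q).mp hatt.1).2
            exact ha.2 (some q) (mem_minedArgs_some.mpr ((hmem q).mp hatt.1).1)
              ((cbAtt_localize hdc hqN haN).mpr hatt)
    | succ m ih =>
        intro a haN ha
        refine ⟨mem_minedArgs_some.mpr ((hmem a).mpr ⟨mem_minedArgs_some.mp ha.1, haN⟩), ?_⟩
        intro b hb hatt
        cases b with
        | none => exact absurd ((hmem a).mp hatt.1).2 hatt.2
        | some q =>
            have hqN : q.1 ≤ N := ((hmem q).mp hatt.1).2
            have hattD : cbAtt (insert (dC, dO) D) q a :=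
              (cbAtt_localize hdc hqN haN).mpr hatt
            obtain ⟨c, hc, hcatt⟩ :=
              ha.2 (some q) (mem_minedArgs_some.mpr hattD.1) hattD
            cases c with
            | none => exact absurd hqN hcatt.2
            | some r =>
                have hrN : r.1 ≤ N := rel_of_mem_groundedSeq hc
                exact ⟨some r, ih r hrN hc, (cbAtt_localize hdc hrN hqN).mp hcatt⟩
  have hiff : some (dC, dO) ∈ minedGrounded D dC dO N ↔
      some (dC, dO) ∈ minedGrounded D' dC dO N := by
    constructor
    · intro h
      obtain ⟨_, ⟨n, rfl⟩, hn⟩ := h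
      exact Set.mem_iUnion.mpr ⟨n, hbwd n _ hdc hn⟩
    · intro h
      obtain ⟨_, ⟨n, rfl⟩, hn⟩ := h
      exact Set.mem_iUnion.mpr ⟨n + 1, hfwd n _ hdc hn⟩
  unfold predict
  by_cases h : some (dC, dO) ∈ minedGrounded D dC dO N
  · rw [if_pos h, if_pos (hiff.mp h)]
  · rw [if_neg h, if_neg (fun h' => h (hiff.mpr h'))]

lemma predict_sdiff {D E : Set (X × Bool)} {dC : X} {dO : Bool} (hcoh : coherent D)
    (hleast : ∀ x : X, dC ≤ x) (hE : E ⊆ D) {c : X × Bool} (hc : c ∈ D) :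
    predict (E \ {c}) dC dO c.1 = predict {p ∈ E | p.1 < c.1} dC dO c.1 := by
  rw [predict_localize _ _ _ _ (hleast c.1)]
  congr 1
  ext p
  constructor
  · rintro ⟨⟨hpE, hpc⟩, hpN⟩
    refine ⟨hpE, lt_of_le_of_ne hpN ?_⟩
    intro heq
    exact hpc (Prod.ext heq (hcoh p (hE hpE) c hc heq))
  · rintro ⟨hpE, hplt⟩
    exact ⟨⟨hpE, fun heq => absurd (congrArg Prod.fst heq) hplt.ne⟩, hplt.le⟩

lemma concise_unique {D : Set (X × Bool)} {dC : X} {dO : Bool} (hfin : D.Finite)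
    (hcoh : coherent D) (hleast : ∀ x : X, dC ≤ x) {E₁ E₂ : Set (X × Bool)}
    (h1 : conciseWrt dC dO D E₁) (h2 : conciseWrt dC dO D E₂) : E₁ = E₂ := by
  have key : ∀ n (c : X × Bool), ({p ∈ D | p.1 < c.1}).ncard < n → (c ∈ E₁ ↔ c ∈ E₂) := by
    intro n
    induction n with
    | zero => exact fun c hc => absurd hc (Nat.not_lt_zero _)
    | succ m ih =>
        intro c hc
        by_cases hcD : c ∈ D
        · have hsets : {p ∈ E₁ | p.1 < c.1} = {p ∈ E₂ | p.1 < c.1} := by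
            ext p
            constructor
            · rintro ⟨hp, hplt⟩
              refine ⟨(ih p ?_).mp hp, hplt⟩
              have hsub : {q ∈ D | q.1 < p.1} ⊂ {q ∈ D | q.1 < c.1} :=
                ⟨fun q hq => ⟨hq.1, lt_trans hq.2 hplt⟩,
                  fun hss => absurd (hss ⟨h1.1 hp, hplt⟩).2 (lt_irrefl _)⟩
              exact lt_of_lt_of_le (Set.ncard_lt_ncard hsub (hfin.subset (fun q hq => hq.1)))
                (Nat.lt_succ_iff.mp hc)
            · rintro ⟨hp, hplt⟩
              refine ⟨(ih p ?_).mpr hp, hplt⟩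
              have hsub : {q ∈ D | q.1 < p.1} ⊂ {q ∈ D | q.1 < c.1} :=
                ⟨fun q hq => ⟨hq.1, lt_trans hq.2 hplt⟩,
                  fun hss => absurd (hss ⟨h2.1 hp, hplt⟩).2 (lt_irrefl _)⟩
              exact lt_of_lt_of_le (Set.ncard_lt_ncard hsub (hfin.subset (fun q hq => hq.1)))
                (Nat.lt_succ_iff.mp hc)
          constructor
          · intro hcE
            have := h1.2 ▸ hcE
            have hsurp : surprising dC dO E₁ c := (h1.2 ▸ hcE).2
            have hsurp2 : surprising dC dO E₂ c := by
              unfold surprising at hsurp ⊢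
              rw [predict_sdiff hcoh hleast h2.1 hcD, ← hsets,
                ← predict_sdiff hcoh hleast h1.1 hcD]
              exact hsurp
            rw [h2.2]
            exact ⟨hcD, hsurp2⟩
          · intro hcE
            have hsurp : surprising dC dO E₂ c := (h2.2 ▸ hcE).2
            have hsurp2 : surprising dC dO E₁ c := by
              unfold surprising at hsurp ⊢
              rw [predict_sdiff hcoh hleast h1.1 hcD, hsets,
                ← predict_sdiff hcoh hleast h2.1 hcD]
              exact hsurp
            rw [h1.2]
            exact ⟨hcD, hsurp2⟩
        · constructor
          · intro hcE; exact absurd ((h1.2 ▸ hcE).1) hcD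
          · intro hcE; exact absurd ((h2.2 ▸ hcE).1) hcD
  ext c
  exact key (({p ∈ D | p.1 < c.1}).ncard + 1) c (Nat.lt_succ_self _)

noncomputable def memRec (dC : X) (dO : Bool) (D : Set (X × Bool)) (hfin : D.Finite)
    (c : X × Bool) : Prop :=
  c ∈ D ∧ predict {p | ∃ _ : p ∈ D ∧ p.1 < c.1, memRec dC dO D hfin p} dC dO c.1 ≠ c.2
termination_by ({p ∈ D | p.1 < c.1}).ncard
decreasing_by
  rename_i p hp
  exact Set.ncard_lt_ncard
    ⟨fun q hq => ⟨hq.1, lt_trans hq.2 hp.2⟩,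
      fun hss => absurd (hss ⟨hp.1, hp.2⟩).2 (lt_irrefl _)⟩
    (hfin.subset (fun q hq => hq.1))

lemma concise_exists {D : Set (X × Bool)} {dC : X} {dO : Bool} (hfin : D.Finite)
    (hcoh : coherent D) (hleast : ∀ x : X, dC ≤ x) :
    conciseWrt dC dO D {c | memRec dC dO D hfin c} := by
  set E : Set (X × Bool) := {c | memRec dC dO D hfin c} with hE
  have hEsub : E ⊆ D := by
    intro c hc
    rw [hE, Set.mem_setOf_eq, memRec] at hc
    exact hc.1
  have hset : ∀ c : X × Bool,
      {p | ∃ _ : p ∈ D ∧ p.1 < c.1, memRec dC dO D hfin p} = {p ∈ E | p.1 < c.1} := by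
    intro c
    ext p
    constructor
    · rintro ⟨hp, hmem⟩; exact ⟨hmem, hp.2⟩
    · rintro ⟨hmem, hlt⟩; exact ⟨⟨hEsub hmem, hlt⟩, hmem⟩
  refine ⟨hEsub, ?_⟩
  ext c
  rw [hE, Set.mem_setOf_eq]
  constructor
  · intro hc
    have hc' := hc
    rw [memRec, hset c] at hc'
    refine ⟨hc'.1, ?_⟩
    unfold surprising
    rw [predict_sdiff hcoh hleast hEsub hc'.1]
    exact hc'.2
  · rintro ⟨hcD, hsurp⟩
    unfold surprising at hsurp
    rw [predict_sdiff hcoh hleast hEsub hcD] at hsurp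
    rw [memRec, hset c]
    exact ⟨hcD, hsurp⟩

lemma conciseSubset_spec {D : Set (X × Bool)} {dC : X} {dO : Bool} (hfin : D.Finite)
    (hcoh : coherent D) (hleast : ∀ x : X, dC ≤ x) :
    conciseWrt dC dO D (conciseSubset dC dO D) := by
  have hex : ∃ D', conciseWrt dC dO D D' := ⟨_, concise_exists hfin hcoh hleast⟩
  rw [conciseSubset, dif_pos hex]
  exact hex.choose_spec


/-- Cautious monotonicity of cAA-CBR (restricted to coherent casebases):
if `D ⊢_c (x₁,y₁)` and `D ⊢_c (x₂,y₂)`, then `D ∪ {(x₁,y₁)} ⊢_c (x₂,y₂)`. -/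
theorem cAACBR_cautiously_monotonic {X : Type} [PartialOrder X]
    (D : Set (X × Bool)) (hfin : D.Finite) (hcoh : coherent D)
    (dC : X) (dO : Bool) (hleast : ∀ x : X, dC ≤ x)
    (x₁ x₂ : X) (y₁ y₂ : Bool) (hcoh' : coherent (insert (x₁, y₁) D))
    (h₁ : cpredict dC dO D x₁ = y₁) (h₂ : cpredict dC dO D x₂ = y₂) :
    cpredict dC dO (insert (x₁, y₁) D) x₂ = y₂ := by
  set S : Set (X × Bool) := conciseSubset dC dO D with hSdef
  have hS : conciseWrt dC dO D S := conciseSubset_spec hfin hcoh hleast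
  -- S is concise w.r.t. the extended casebase
  have hS' : conciseWrt dC dO (insert (x₁, y₁) D) S := by
    refine ⟨fun p hp => Set.mem_insert_of_mem _ (hS.1 hp), ?_⟩
    ext p
    constructor
    · intro hp
      have := hS.2 ▸ hp
      exact ⟨Set.mem_insert_of_mem _ this.1, this.2⟩
    · rintro ⟨hpmem, hsurp⟩
      rcases hpmem with heq | hpD
      · by_cases hpD' : p ∈ D
        · rw [hS.2]; exact ⟨hpD', hsurp⟩
        · exfalso
          have hnS : p ∉ S := fun h => hpD' (hS.1 h)
          have : S \ {p} = S := Set.diff_singleton_eq_self hnS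
          unfold surprising at hsurp
          rw [this, heq] at hsurp
          exact hsurp h₁
      · rw [hS.2]; exact ⟨hpD, hsurp⟩
  have hfin' : (insert (x₁, y₁) D).Finite := hfin.insert _
  have heq : conciseSubset dC dO (insert (x₁, y₁) D) = S :=
    concise_unique hfin' hcoh' hleast (conciseSubset_spec hfin' hcoh' hleast) hS'
  rw [cpredict, heq]
  exact h₂


end AACBR
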